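/- If Q is a maximal increasing subsequence of R_{A,B}[f(i⊢,j⊢):f(i⊣,j⊣)] that is [r(i⊢,j⊢):r(i⊣,j⊣)]-banded, then Q begins with r(i⊢,j⊢) and ends with r(i⊣,j⊣). -/

import Mathlib

/-- Formal tokens: `r i j` (weight `c - d i j`) and `rt i j` (the token `r̃(i,j)`, weight `c`). -/
inductive Tok where
  | r  (i j : ℕ) : Tok
  | rt (i j : ℕ) : Tok
deriving DecidableEq

/-- The domain of tokens: `r(i,j)` for `1 ≤ i ≤ m`, `1 ≤ j ≤ n`,
and `r̃(i,j)` for `2 ≤ i ≤ m`, `2 ≤ j ≤ n`. -/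
def TokDom (m n : ℕ) : Tok → Prop
  | .r i j  => 1 ≤ i ∧ i ≤ m ∧ 1 ≤ j ∧ j ≤ n
  | .rt i j => 2 ≤ i ∧ i ≤ m ∧ 2 ≤ j ∧ j ≤ n

/-- The position `f(q)` of a token in the sequence `R_{A,B}`. -/
def tpos (n : ℕ) : Tok → ℕ
  | .r i j  => (i - 1) * (2 * n - 1) + j
  | .rt i j => (i - 1) * (2 * n - 1) - j + 2

/-- The integer value of a token in the sequence `R_{A,B}`. -/
def tval (m : ℕ) : Tok → ℕ
  | .r i j  => (j - 1) * (2 * m - 1) + i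
  | .rt i j => (j - 1) * (2 * m - 1) - i + 2

/-- The (half-integer) row coordinate `i_q` of a token. -/
def iq : Tok → ℚ
  | .r i _  => i
  | .rt i _ => (i : ℚ) - 1/2

/-- The (half-integer) column coordinate `j_q` of a token. -/
def jq : Tok → ℚ
  | .r _ j  => j
  | .rt _ j => (j : ℚ) - 1/2

/-- The weight of a token: `c - d i j` for `r(i,j)` and `c` for `r̃(i,j)`. -/
def tw (c : ℕ) (d : ℕ → ℕ → ℕ) : Tok → ℕ
  | .r i j => c - d i j
  | .rt _ _ => c

/-- `Q` is an increasing subsequence of the segment of `R_{A,B}` occupying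
positions `pl` through `pr`: its tokens are in the domain, their positions lie in
`[pl, pr]` and strictly increase, and their values strictly increase. -/
def IncSeg (m n pl pr : ℕ) (Q : List Tok) : Prop :=
  (∀ t ∈ Q, TokDom m n t ∧ pl ≤ tpos n t ∧ tpos n t ≤ pr) ∧
    Q.Chain' fun t t' => tpos n t < tpos n t' ∧ tval m t < tval m t'

/-- `Q` is `[a:b]`-banded: every value lies in `[a, b]`. -/
def Banded (m a b : ℕ) (Q : List Tok) : Prop :=
  ∀ t ∈ Q, a ≤ tval m t ∧ tval m t ≤ b

/-- `Q` is a maximal increasing subsequence of the segment `[pl, pr]` of `R_{A,B}`: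
it is the only increasing subsequence of the segment having it as a subsequence. -/
def MaxIncSeg (m n pl pr : ℕ) (Q : List Tok) : Prop :=
  IncSeg m n pl pr Q ∧ ∀ Q', IncSeg m n pl pr Q' → Q.Sublist Q' → Q' = Q

/-- `Q` is a maximal `[a:b]`-banded increasing subsequence of the segment `[pl, pr]`. -/
def MaxBandIncSeg (m n pl pr a b : ℕ) (Q : List Tok) : Prop :=
  IncSeg m n pl pr Q ∧ Banded m a b Q ∧
    ∀ Q', IncSeg m n pl pr Q' → Banded m a b Q' → Q.Sublist Q' → Q' = Q


/-!
Positions are injective on tokens, since each row of `R_{A,B}` is a block of `2n - 1` consecutive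
positions; values are injective too, because the value of a token is the position of its
transpose in `R_{B,A}`. Hence every other token of a `[r(i⊢,j⊢):r(i⊣,j⊣)]`-banded increasing
subsequence of the segment lies strictly after and strictly above `r(i⊢,j⊢)`, so if `Q` did not
start with `r(i⊢,j⊢)`, prepending it would extend `Q`. The right endpoint is symmetric.
-/

theorem eq_and_eq_of_mul_add_eq_mul_add {N a b x y : ℕ} (hx₁ : 1 ≤ x) (hxN : x ≤ N)
    (hy₁ : 1 ≤ y) (hyN : y ≤ N) (h : a * N + x = b * N + y) : a = b ∧ x = y := by
  have decode : ∀ c z, z < N → (z + N * c) / N = c ∧ (z + N * c) % N = z :=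
    fun c z hz => (Nat.div_mod_unique (by omega)).2 ⟨rfl, hz⟩
  have h' : (x - 1) + N * a = (y - 1) + N * b := by
    rw [mul_comm N a, mul_comm N b]; omega
  obtain ⟨hxa, hxm⟩ := decode a (x - 1) (by omega)
  obtain ⟨hyb, hym⟩ := decode b (y - 1) (by omega)
  rw [h'] at hxa hxm
  omega

namespace Tok

/-- Rows of `R_{A,B}` are blocks of `2n - 1` positions: block `i - 1` holds `r(i, j)` at offset
`j` and `r̃(i + 1, j)` at offset `2n + 1 - j`. -/
theorem tpos_rt {n i j : ℕ} (hi : 2 ≤ i) (hj : 2 ≤ j) (hjn : j ≤ n) :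
    tpos n (.rt i j) = (i - 2) * (2 * n - 1) + (2 * n + 1 - j) := by
  have hrow : (i - 1) * (2 * n - 1) = (i - 2) * (2 * n - 1) + (2 * n - 1) := by
    rw [show i - 1 = i - 2 + 1 by omega, add_mul, one_mul]
  simp only [tpos]
  omega

theorem tpos_injOn (m n : ℕ) : Set.InjOn (tpos n) {t | TokDom m n t} := by
  rintro (⟨i, j⟩ | ⟨i, j⟩) ⟨hi, him, hj, hjn⟩ (⟨i', j'⟩ | ⟨i', j'⟩) ⟨hi', him', hj', hjn'⟩ h <;>
    (try simp (disch := omega) only [tpos_rt] at h) <;>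
    obtain ⟨hrow, hcol⟩ := eq_and_eq_of_mul_add_eq_mul_add (N := 2 * n - 1)
      (by omega) (by omega) (by omega) (by omega) h <;>
    first | omega | (congr 1 <;> omega)

def transpose : Tok → Tok
  | .r i j => .r j i
  | .rt i j => .rt j i

theorem transpose_injective : Function.Injective transpose := by
  rintro (⟨i, j⟩ | ⟨i, j⟩) (⟨i', j'⟩ | ⟨i', j'⟩) h <;> simp_all [transpose]

theorem tokDom_transpose {m n : ℕ} {t : Tok} (h : TokDom m n t) : TokDom n m t.transpose := by
  cases t <;> exact ⟨h.2.2.1, h.2.2.2, h.1, h.2.1⟩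

theorem tval_eq_tpos_transpose (m : ℕ) (t : Tok) : tval m t = tpos m t.transpose := by
  cases t <;> rfl

theorem tval_injOn (m n : ℕ) : Set.InjOn (tval m) {t | TokDom m n t} := by
  intro t ht t' ht' h
  rw [tval_eq_tpos_transpose, tval_eq_tpos_transpose] at h
  exact transpose_injective (tpos_injOn n m (tokDom_transpose ht) (tokDom_transpose ht') h)

theorem tpos_lt_and_tval_lt_of_ne {m n : ℕ} {s t : Tok} (hs : TokDom m n s) (ht : TokDom m n t)
    (hpos : tpos n s ≤ tpos n t) (hval : tval m s ≤ tval m t) (hne : s ≠ t) :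
    tpos n s < tpos n t ∧ tval m s < tval m t :=
  ⟨hpos.lt_of_ne fun h => hne (tpos_injOn m n hs ht h),
    hval.lt_of_ne fun h => hne (tval_injOn m n hs ht h)⟩

end Tok

section Maximal

variable {m n pl pr a b : ℕ} {Q : List Tok} {x : Tok}

theorem MaxBandIncSeg.head?_eq (hQ : MaxBandIncSeg m n (tpos n x) pr (tval m x) b Q)
    (hx : TokDom m n x) (hxr : tpos n x ≤ pr) (hxb : tval m x ≤ b) : Q.head? = some x := by
  obtain ⟨⟨hmem, hchain⟩, hband, hmax⟩ := hQ
  by_contra hhead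
  have hinc : IncSeg m n (tpos n x) pr (x :: Q) := by
    refine ⟨List.forall_mem_cons.2 ⟨⟨hx, le_rfl, hxr⟩, hmem⟩, List.isChain_cons.2 ⟨?_, hchain⟩⟩
    intro t ht
    have htQ : t ∈ Q := List.mem_of_mem_head? ht
    exact Tok.tpos_lt_and_tval_lt_of_ne hx (hmem t htQ).1 (hmem t htQ).2.1 (hband t htQ).1
      fun h => hhead (h ▸ ht)
  exact List.cons_ne_self x Q <|
    hmax _ hinc (List.forall_mem_cons.2 ⟨⟨le_rfl, hxb⟩, hband⟩) (List.sublist_cons_self x Q)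

theorem MaxBandIncSeg.getLast?_eq (hQ : MaxBandIncSeg m n pl (tpos n x) a (tval m x) Q)
    (hx : TokDom m n x) (hxl : pl ≤ tpos n x) (hxa : a ≤ tval m x) : Q.getLast? = some x := by
  obtain ⟨⟨hmem, hchain⟩, hband, hmax⟩ := hQ
  by_contra hlast
  have hinc : IncSeg m n pl (tpos n x) (Q ++ [x]) := by
    refine ⟨fun t ht => ?_, List.isChain_append.2 ⟨hchain, List.isChain_singleton x, ?_⟩⟩
    · simp only [List.mem_append, List.mem_singleton] at ht
      rcases ht with htQ | rfl
      · exact hmem t htQ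
      · exact ⟨hx, hxl, le_rfl⟩
    · intro t ht y hy
      obtain rfl : y = x := by simpa using hy.symm
      have htQ : t ∈ Q := List.mem_of_mem_getLast? ht
      exact Tok.tpos_lt_and_tval_lt_of_ne (hmem t htQ).1 hx (hmem t htQ).2.2 (hband t htQ).2
        fun h => hlast (h ▸ ht)
  have hband' : Banded m a (tval m x) (Q ++ [x]) := fun t ht => by
    simp only [List.mem_append, List.mem_singleton] at ht
    rcases ht with htQ | rfl
    · exact hband t htQ
    · exact ⟨hxa, le_rfl⟩
  have hlen := congrArg List.length (hmax _ hinc hband' (List.sublist_append_left Q [x]))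
  simp at hlen

end Maximal

theorem banded_maximal_endpoints (m n : ℕ) (il ir jl jr : ℕ)
    (hil : 1 ≤ il) (hii : il ≤ ir) (him : ir ≤ m)
    (hjl : 1 ≤ jl) (hjj : jl ≤ jr) (hjn : jr ≤ n)
    (Q : List Tok)
    (hQ : MaxBandIncSeg m n (tpos n (.r il jl)) (tpos n (.r ir jr))
        (tval m (.r il jl)) (tval m (.r ir jr)) Q) :
    Q.head? = some (.r il jl) ∧ Q.getLast? = some (.r ir jr) := by
  have hpos : tpos n (.r il jl) ≤ tpos n (.r ir jr) := by
    simp only [tpos]; gcongr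
  have hval : tval m (.r il jl) ≤ tval m (.r ir jr) := by
    simp only [tval]; gcongr
  exact ⟨hQ.head?_eq ⟨hil, by omega, hjl, by omega⟩ hpos hval,
    hQ.getLast?_eq ⟨by omega, him, by omega, hjn⟩ hpos hval⟩
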